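/- arXiv:2208.01581 — 4 statements merged into one kernel-verified Lean document; each statement's English description precedes it below -/
import Mathlib

section
/- For any k, l ∈ ℤ³ ∖ {0} and any real coefficient vectors φ = (φ_p)_{p∈L_k} and ψ = (ψ_q)_{q∈L_l}, the generalized excitation operators satisfy [b_k(φ), b_l(ψ)] = 0, [b_k*(φ), b_l*(ψ)] = 0, and [b_k(φ), b_l*(ψ)] = δ_{k,l} (Σ_{p∈L_k} φ_p ψ_p) · 1 + ε_{k,l}(φ; ψ), where the exchange correction is the operator ε_{k,l}(φ; ψ) = − Σ_{p∈L_k} Σ_{q∈L_l} φ_p ψ_q ( δ_{p,q} c_{q−l} c_{p−k}* + δ_{p−k,q−l} c_q* c_p ). -/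
/-!
By the CAR, the commutator of two quadratic monomials normal-orders as
`[c_a* c_b, c_a'* c_b'] = δ_{b,a'} δ_{a,b'} - δ_{b,a'} c_b' c_a* - δ_{a,b'} c_a'* c_b`,
and the commutators of the `b`'s are bilinear combinations of these. For `[b_k(φ), b_l(ψ)]` and
`[b_k*(φ), b_l*(ψ)]` every delta vanishes, since a lune `L_k` lies outside the Fermi ball while
its translate `L_k - k` lies inside it. For `[b_k(φ), b_l*(ψ)]` the constant term survives only
for `p = q` and `k = l`, and the remaining normal-ordered terms are the exchange correction.
-/

noncomputable section

open ContinuousLinearMap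

/-- squared Euclidean norm of a point of `ℤ³` -/
def normSq (p : Fin 3 → ℤ) : ℤ := ∑ i, (p i) ^ 2

/-- membership in the lune `L_k = {p : |p - k| ≤ k_F < |p|}` -/
def inLune (kF : ℝ) (k p : Fin 3 → ℤ) : Prop :=
  ((normSq (p - k) : ℝ)) ≤ kF ^ 2 ∧ kF ^ 2 < (normSq p : ℝ)

variable {H : Type*} [NormedAddCommGroup H] [InnerProductSpace ℂ H] [CompleteSpace H]

/-- the generalized excitation (annihilation) operator `b_k(φ) = Σ_{p∈L_k} φ_p c_{p-k}* c_p` -/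
def bOp (c : (Fin 3 → ℤ) → H →L[ℂ] H) (k : Fin 3 → ℤ) (Lk : Finset (Fin 3 → ℤ))
    (φ : (Fin 3 → ℤ) → ℝ) : H →L[ℂ] H :=
  ∑ p ∈ Lk, (φ p : ℂ) • (adjoint (c (p - k)) * c p)

/-- the generalized excitation (creation) operator `b_k*(φ) = Σ_{p∈L_k} φ_p c_p* c_{p-k}` -/
def bOpStar (c : (Fin 3 → ℤ) → H →L[ℂ] H) (k : Fin 3 → ℤ) (Lk : Finset (Fin 3 → ℤ))
    (φ : (Fin 3 → ℤ) → ℝ) : H →L[ℂ] H :=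
  ∑ p ∈ Lk, (φ p : ℂ) • (adjoint (c p) * c (p - k))

/-- the exchange correction
`ε_{k,l}(φ;ψ) = - Σ_{p∈L_k} Σ_{q∈L_l} φ_p ψ_q (δ_{p,q} c_{q-l} c_{p-k}* + δ_{p-k,q-l} c_q* c_p)` -/
def excorr (c : (Fin 3 → ℤ) → H →L[ℂ] H) (k l : Fin 3 → ℤ)
    (Lk Ll : Finset (Fin 3 → ℤ)) (φ ψ : (Fin 3 → ℤ) → ℝ) : H →L[ℂ] H :=
  - ∑ p ∈ Lk, ∑ q ∈ Ll, ((φ p * ψ q : ℝ) : ℂ) •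
      ((if p = q then c (q - l) * adjoint (c (p - k)) else 0)
        + (if p - k = q - l then adjoint (c q) * c p else 0))

attribute [local instance] LieRing.ofAssociativeRing

theorem lie_sum_smul_sum_smul {K A ι κ : Type*} [CommRing K] [Ring A] [Algebra K A]
    (s : Finset ι) (t : Finset κ) (f : ι → K) (g : κ → K) (X : ι → A) (Y : κ → A) :
    ⁅∑ i ∈ s, f i • X i, ∑ j ∈ t, g j • Y j⁆ = ∑ i ∈ s, ∑ j ∈ t, (f i * g j) • ⁅X i, Y j⁆ := by
  simp only [sum_lie_sum, smul_lie, LieAlgebra.lie_smul, smul_smul, mul_comm]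

theorem lie_mul_mul_eq_anticomm {A : Type*} [Ring A] (a b c d : A) :
    ⁅a * b, c * d⁆ = a * (b * c + c * b) * d - a * c * (b * d + d * b)
      + (a * c + c * a) * d * b - c * (a * d + d * a) * b := by
  rw [Ring.lie_def]
  noncomm_ring

section CAR

variable {R ι : Type*} [Ring R] [StarRing R] {c : ι → R}

theorem star_anticomm_of_anticomm (hcc : ∀ i j, c i * c j + c j * c i = 0) (i j : ι) :
    star (c i) * star (c j) + star (c j) * star (c i) = 0 := by
  simpa only [star_add, star_mul, star_zero] using congrArg star (hcc j i)

theorem lie_star_mul_star_mul_of_car [DecidableEq ι] (hcc : ∀ i j, c i * c j + c j * c i = 0)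
    (hcs : ∀ i j, c i * star (c j) + star (c j) * c i = if i = j then 1 else 0)
    (a b a' b' : ι) :
    ⁅star (c a) * c b, star (c a') * c b'⁆
      = (if b = a' ∧ a = b' then 1 else 0)
        - ((if b = a' then c b' * star (c a) else 0) + (if a = b' then star (c a') * c b else 0)) := by
  have hab' : star (c a) * c b' = (if a = b' then 1 else 0) - c b' * star (c a) := by
    simpa only [@eq_comm _ b' a] using eq_sub_of_add_eq' (hcs b' a)
  rw [lie_mul_mul_eq_anticomm, hcs b a', hcc b b', star_anticomm_of_anticomm hcc a a',
    add_comm (star (c a) * c b'), hcs b' a]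
  simp only [mul_ite, ite_mul, mul_one, mul_zero, zero_mul, sub_zero, add_zero, hab',
    @eq_comm _ b' a]
  by_cases h : b = a' <;> by_cases h' : a = b' <;>
    simp only [h, h', if_true, if_false, and_self, false_and, true_and] <;> abel

end CAR

theorem inLune.ne_sub {kF : ℝ} {k l p q : Fin 3 → ℤ} (hp : inLune kF k p) (hq : inLune kF l q) :
    p ≠ q - l := by
  rintro rfl
  exact absurd hq.1 (not_le.2 hp.2)

section Excitation

variable {c : (Fin 3 → ℤ) → H →L[ℂ] H} {kF : ℝ} {k l : Fin 3 → ℤ} {Lk Ll : Finset (Fin 3 → ℤ)}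

theorem bOp_lie_bOp (hcc : ∀ p q, c p * c q + c q * c p = 0)
    (hcs : ∀ p q, c p * star (c q) + star (c q) * c p = if p = q then 1 else 0)
    (hLk : ∀ p ∈ Lk, inLune kF k p) (hLl : ∀ q ∈ Ll, inLune kF l q) (φ ψ : (Fin 3 → ℤ) → ℝ) :
    ⁅bOp c k Lk φ, bOp c l Ll ψ⁆ = 0 := by
  simp only [bOp, ← star_eq_adjoint, lie_sum_smul_sum_smul]
  refine Finset.sum_eq_zero fun p hp => Finset.sum_eq_zero fun q hq => ?_
  have h₁ := (hLk p hp).ne_sub (hLl q hq)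
  have h₂ := ((hLl q hq).ne_sub (hLk p hp)).symm
  simp only [lie_star_mul_star_mul_of_car hcc hcs, h₁, h₂, if_false, and_false, add_zero,
    sub_zero, smul_zero]

theorem bOpStar_lie_bOpStar (hcc : ∀ p q, c p * c q + c q * c p = 0)
    (hcs : ∀ p q, c p * star (c q) + star (c q) * c p = if p = q then 1 else 0)
    (hLk : ∀ p ∈ Lk, inLune kF k p) (hLl : ∀ q ∈ Ll, inLune kF l q) (φ ψ : (Fin 3 → ℤ) → ℝ) :
    ⁅bOpStar c k Lk φ, bOpStar c l Ll ψ⁆ = 0 := by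
  simp only [bOpStar, ← star_eq_adjoint, lie_sum_smul_sum_smul]
  refine Finset.sum_eq_zero fun p hp => Finset.sum_eq_zero fun q hq => ?_
  have h₁ := ((hLl q hq).ne_sub (hLk p hp)).symm
  have h₂ := (hLk p hp).ne_sub (hLl q hq)
  simp only [lie_star_mul_star_mul_of_car hcc hcs, h₁, h₂, if_false, and_false, add_zero,
    sub_zero, smul_zero]

theorem bOp_lie_bOpStar (hcc : ∀ p q, c p * c q + c q * c p = 0)
    (hcs : ∀ p q, c p * star (c q) + star (c q) * c p = if p = q then 1 else 0)
    (hLk : ∀ p, p ∈ Lk ↔ inLune kF k p) (hLl : ∀ p, p ∈ Ll ↔ inLune kF l p)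
    (φ ψ : (Fin 3 → ℤ) → ℝ) :
    ⁅bOp c k Lk φ, bOpStar c l Ll ψ⁆
      = (if k = l then ((∑ p ∈ Lk, φ p * ψ p : ℝ) : ℂ) • (1 : H →L[ℂ] H) else 0)
        + excorr c k l Lk Ll φ ψ := by
  have hdiag : ∑ p ∈ Lk, ∑ q ∈ Ll, ((φ p : ℂ) * ψ q) •
      (if p = q ∧ p - k = q - l then (1 : H →L[ℂ] H) else 0)
      = if k = l then ((∑ p ∈ Lk, φ p * ψ p : ℝ) : ℂ) • (1 : H →L[ℂ] H) else 0 := by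
    split_ifs with hkl
    · subst hkl
      obtain rfl : Lk = Ll := Finset.ext fun p => (hLk p).trans (hLl p).symm
      simp [Finset.sum_smul]
    · refine Finset.sum_eq_zero fun p _ => Finset.sum_eq_zero fun q _ => ?_
      rw [if_neg fun h => hkl (sub_right_inj.mp (h.1 ▸ h.2)), smul_zero]
  simp only [bOp, bOpStar, excorr, ← star_eq_adjoint, lie_sum_smul_sum_smul,
    lie_star_mul_star_mul_of_car hcc hcs, smul_sub, Finset.sum_sub_distrib, Complex.ofReal_mul]
  rw [hdiag, sub_eq_add_neg]

end Excitation

theorem quasi_bosonic_commutation_relations_general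
    (c : (Fin 3 → ℤ) → H →L[ℂ] H)
    (hCAR1 : ∀ p q, c p * c q + c q * c p = 0)
    (hCAR2 : ∀ p q, c p * adjoint (c q) + adjoint (c q) * c p
        = if p = q then (1 : H →L[ℂ] H) else 0)
    (kF : ℝ)
    (k l : Fin 3 → ℤ)
    (Lk Ll : Finset (Fin 3 → ℤ))
    (hLk : ∀ p, p ∈ Lk ↔ inLune kF k p) (hLl : ∀ p, p ∈ Ll ↔ inLune kF l p)
    (φ ψ : (Fin 3 → ℤ) → ℝ) :
    bOp c k Lk φ * bOp c l Ll ψ - bOp c l Ll ψ * bOp c k Lk φ = 0 ∧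
    bOpStar c k Lk φ * bOpStar c l Ll ψ - bOpStar c l Ll ψ * bOpStar c k Lk φ = 0 ∧
    bOp c k Lk φ * bOpStar c l Ll ψ - bOpStar c l Ll ψ * bOp c k Lk φ
      = (if k = l then ((∑ p ∈ Lk, φ p * ψ p : ℝ) : ℂ) • (1 : H →L[ℂ] H) else 0)
        + excorr c k l Lk Ll φ ψ := by
  have hcs : ∀ p q, c p * star (c q) + star (c q) * c p = if p = q then 1 else 0 := by
    simpa only [star_eq_adjoint] using hCAR2
  exact ⟨bOp_lie_bOp hCAR1 hcs (fun p => (hLk p).1) (fun q => (hLl q).1) φ ψ,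
    bOpStar_lie_bOpStar hCAR1 hcs (fun p => (hLk p).1) (fun q => (hLl q).1) φ ψ,
    bOp_lie_bOpStar hCAR1 hcs hLk hLl φ ψ⟩

/-- quasi-bosonic commutation relations of the generalized excitation operators. -/
theorem quasi_bosonic_commutation_relations
    (c : (Fin 3 → ℤ) → H →L[ℂ] H)
    (hCAR1 : ∀ p q, c p * c q + c q * c p = 0)
    (hCAR2 : ∀ p q, c p * adjoint (c q) + adjoint (c q) * c p
        = if p = q then (1 : H →L[ℂ] H) else 0)
    (kF : ℝ) (hkF : 0 < kF)
    (k l : Fin 3 → ℤ) (hk : k ≠ 0) (hl : l ≠ 0)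
    (Lk Ll : Finset (Fin 3 → ℤ))
    (hLk : ∀ p, p ∈ Lk ↔ inLune kF k p) (hLl : ∀ p, p ∈ Ll ↔ inLune kF l p)
    (φ ψ : (Fin 3 → ℤ) → ℝ) :
    bOp c k Lk φ * bOp c l Ll ψ - bOp c l Ll ψ * bOp c k Lk φ = 0 ∧
    bOpStar c k Lk φ * bOpStar c l Ll ψ - bOpStar c l Ll ψ * bOpStar c k Lk φ = 0 ∧
    bOp c k Lk φ * bOpStar c l Ll ψ - bOpStar c l Ll ψ * bOp c k Lk φ
      = (if k = l then ((∑ p ∈ Lk, φ p * ψ p : ℝ) : ℂ) • (1 : H →L[ℂ] H) else 0)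
        + excorr c k l Lk Ll φ ψ :=
  quasi_bosonic_commutation_relations_general c hCAR1 hCAR2 kF k l Lk Ll hLk hLl φ ψ

end
end

section
/- Let A : ℤ³ × ℤ³ × ℤ³ → ℂ be finitely supported with A(p,q,r) = 0 unless p ∈ B_F^c and q, r ∈ B_F. Let Ψ ∈ H be such that the family (‖c_p Ψ‖²)_{p ∈ B_F^c} is summable and Σ_{p∈B_F^c} ‖c_p Ψ‖² = Σ_{q∈B_F} ‖c_q* Ψ‖² (as holds for vectors in the N-particle space with N = |B_F|); denote this common value by ⟨Ψ, 𝒩_E Ψ⟩. Then ‖ Σ_{p∈B_F^c} Σ_{q,r∈B_F} A(p,q,r) c_p* c_q c_r Ψ ‖² ≤ 5 ( Σ_{p∈B_F^c} Σ_{q,r∈B_F} |A(p,q,r)|² ) ( ⟨Ψ, 𝒩_E Ψ⟩ + ‖Ψ‖² ). -/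
/-!
Put `V_p = ∑_{q,r} A_{pqr} c_q c_r` and `T = ∑ₚ c_p* V_p`. As `c_q c_r = -c_r c_q`, `A` may be
replaced by its antisymmetric part `K` in `(q, r)`, whose `ℓ²`-norm is not larger. For such `K`,
moving all annihilators to the right by the CAR gives the operator identity

    T* T = 2‖K‖² - 4 ∑_{p,q} a_{pq} a_{pq}* + ∑ₚ V_p V_p* - 2 ∑_{q,r} Y_{qr} Y_{qr}*
             + 4 ∑_q Z_q Z_q* - T T*,

where `a_{pq} = ∑_r K_{pqr} c_r`, `Y_{qr} = ∑ₚ K_{pqr} c_p*` and `Z_q = ∑ₚ c_p* a_{pq}`.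
Drop the three negative squares. Since `{c(f), c(f)*} = ‖f‖²`, both `c(f)` and `c(f)*` have
norm at most `‖f‖`, which bounds `V_p* Ψ = ∑_q a_{pq}* c_q* Ψ` and `Z_q* Ψ = ∑ₚ a_{pq}* c_p Ψ`:

    ‖T Ψ‖² ≤ ‖K‖² (2‖Ψ‖² + ∑_{q ∈ B_F} ‖c_q* Ψ‖² + 4 ∑_{p ∉ B_F} ‖c_p Ψ‖²).
-/

noncomputable section

open ContinuousLinearMap

/-- membership in the Fermi ball `B_F = {p : |p| ≤ k_F}` -/
def inBF (kF : ℝ) (p : Fin 3 → ℤ) : Prop := ((normSq p : ℝ)) ≤ kF ^ 2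

namespace CAR

variable {ι R : Type*}

def antisymmPart (M : ι → ι → ℂ) (q r : ι) : ℂ := (M q r - M r q) / 2

lemma antisymmPart_apply_swap (M : ι → ι → ℂ) (q r : ι) :
    antisymmPart M q r = - antisymmPart M r q := by
  simp only [antisymmPart]; ring

lemma sum_norm_sq_antisymmPart_le (s : Finset ι) (M : ι → ι → ℂ) :
    ∑ q ∈ s, ∑ r ∈ s, ‖antisymmPart M q r‖ ^ 2 ≤ ∑ q ∈ s, ∑ r ∈ s, ‖M q r‖ ^ 2 := by
  have hterm : ∀ q r, ‖antisymmPart M q r‖ ^ 2 ≤ (‖M q r‖ ^ 2 + ‖M r q‖ ^ 2) / 2 := by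
    intro q r
    have h := norm_sub_le (M q r) (M r q)
    rw [antisymmPart, norm_div, Complex.norm_two, div_pow]
    nlinarith [sq_nonneg (‖M q r‖ - ‖M r q‖), norm_nonneg (M q r - M r q)]
  calc ∑ q ∈ s, ∑ r ∈ s, ‖antisymmPart M q r‖ ^ 2
      ≤ ∑ q ∈ s, ∑ r ∈ s, (‖M q r‖ ^ 2 + ‖M r q‖ ^ 2) / 2 :=
        Finset.sum_le_sum fun q _ => Finset.sum_le_sum fun r _ => hterm q r
    _ = ∑ q ∈ s, ∑ r ∈ s, ‖M q r‖ ^ 2 := by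
        simp only [← Finset.sum_div, Finset.sum_add_distrib]
        rw [Finset.sum_comm (f := fun q r => ‖M r q‖ ^ 2)]
        ring

section Ring

variable [Ring R] [Algebra ℂ R] (c : ι → R)

def smeared (s : Finset ι) (f : ι → ℂ) : R := ∑ r ∈ s, f r • c r

def pairOp (s : Finset ι) (M : ι → ι → ℂ) : R := ∑ q ∈ s, c q * smeared c s (M q)

lemma pairOp_eq_sum (s : Finset ι) (M : ι → ι → ℂ) :
    pairOp c s M = ∑ q ∈ s, ∑ r ∈ s, M q r • (c q * c r) := by
  simp only [pairOp, smeared, Finset.mul_sum, mul_smul_comm]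

variable {c}

lemma commute_pairOp (hcc : ∀ p q, c p * c q + c q * c p = 0) (x : ι) (s : Finset ι)
    (M : ι → ι → ℂ) : c x * pairOp c s M = pairOp c s M * c x := by
  have hanti : ∀ p q, c p * c q = - (c q * c p) := fun p q => eq_neg_of_add_eq_zero_left (hcc p q)
  simp only [pairOp_eq_sum, Finset.mul_sum, Finset.sum_mul, mul_smul_comm, smul_mul_assoc]
  refine Finset.sum_congr rfl fun q _ => Finset.sum_congr rfl fun r _ => ?_
  rw [← mul_assoc, hanti x q, neg_mul, mul_assoc, hanti x r, mul_neg, neg_neg, mul_assoc]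

lemma pairOp_antisymmPart (hcc : ∀ p q, c p * c q + c q * c p = 0) (s : Finset ι)
    (M : ι → ι → ℂ) : pairOp c s (antisymmPart M) = pairOp c s M := by
  have hswap : ∑ q ∈ s, ∑ r ∈ s, M r q • (c q * c r) = - pairOp c s M := by
    rw [pairOp_eq_sum, Finset.sum_comm, ← Finset.sum_neg_distrib]
    refine Finset.sum_congr rfl fun q _ => ?_
    rw [← Finset.sum_neg_distrib]
    refine Finset.sum_congr rfl fun r _ => ?_
    rw [eq_neg_of_add_eq_zero_left (hcc r q), smul_neg]
  rw [pairOp_eq_sum]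
  simp only [antisymmPart, div_eq_inv_mul, mul_sub, sub_smul, mul_smul, Finset.sum_sub_distrib,
    ← Finset.smul_sum, hswap, ← pairOp_eq_sum]
  module

end Ring

section StarRing

variable [Ring R] [StarRing R] {c : ι → R}

lemma mul_star_self_sum_star_mul (X : ι → R) (P : Finset ι) :
    (∑ b ∈ P, star (c b) * X b) * star (∑ a ∈ P, star (c a) * X a) =
      ∑ a ∈ P, ∑ b ∈ P, star (c b) * (X b * star (X a)) * c a := by
  simp only [star_sum, star_mul, star_star, Finset.sum_mul, Finset.mul_sum, mul_assoc]

lemma sum_mul_star_self_sum_star_mul {κ : Type*} (F : κ → ι → R) (Q : Finset κ)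
    (P : Finset ι) :
    ∑ x ∈ Q, (∑ b ∈ P, star (c b) * F x b) * star (∑ a ∈ P, star (c a) * F x a) =
      ∑ a ∈ P, ∑ b ∈ P, star (c b) * (∑ x ∈ Q, F x b * star (F x a)) * c a := by
  rw [Finset.sum_congr rfl fun x _ => mul_star_self_sum_star_mul (F x) P, Finset.sum_comm]
  refine Finset.sum_congr rfl fun a _ => ?_
  rw [Finset.sum_comm]
  simp only [Finset.mul_sum, Finset.sum_mul]

variable [DecidableEq ι]

lemma anticomm_star_star
    (hcs : ∀ p q, c p * star (c q) + star (c q) * c p = if p = q then 1 else 0) (p q : ι) :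
    star (c p) * star (star (c q)) + star (star (c q)) * star (c p) =
      if p = q then 1 else 0 := by
  rw [star_star, add_comm, hcs q p]
  exact if_congr eq_comm rfl rfl

lemma star_mul_self_sum_star_mul_of_commute
    (hcs : ∀ p q, c p * star (c q) + star (c q) * c p = if p = q then 1 else 0)
    {V : ι → R} (hV : ∀ x p, c x * V p = V p * c x) (P : Finset ι) :
    star (∑ a ∈ P, star (c a) * V a) * ∑ b ∈ P, star (c b) * V b =
      ∑ a ∈ P, star (V a) * V a
        - ∑ a ∈ P, ∑ b ∈ P, star (c b) * (star (V a) * V b) * c a := by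
  have term : ∀ a b, star (V a) * c a * (star (c b) * V b) =
      (if a = b then star (V a) * V b else 0)
        - star (c b) * (star (V a) * V b) * c a := by
    intro a b
    have h : c a * star (c b) = (if a = b then 1 else 0) - star (c b) * c a := by
      rw [← hcs a b]; abel
    have hVc : star (V a) * star (c b) = star (c b) * star (V a) := by
      rw [← star_mul, ← star_mul, hV]
    calc star (V a) * c a * (star (c b) * V b) = star (V a) * (c a * star (c b)) * V b := by
          simp only [mul_assoc]
      _ = (if a = b then star (V a) * V b else 0)
            - star (V a) * star (c b) * (c a * V b) := by
          rw [h, mul_sub, sub_mul]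
          split_ifs <;> simp only [mul_one, mul_zero, zero_mul, mul_assoc]
      _ = _ := by rw [hVc, hV]; simp only [mul_assoc]
  rw [star_sum, Finset.sum_mul_sum]
  simp only [star_mul, star_star, term, Finset.sum_sub_distrib]
  congr 1
  exact Finset.sum_congr rfl fun a ha => by rw [Finset.sum_ite_eq, if_pos ha]

end StarRing

section StarAlgebra

variable [Ring R] [StarRing R] [Algebra ℂ R] {c : ι → R}

variable (c) in
def cubicOp (P B : Finset ι) (K : ι → ι → ι → ℂ) : R :=
  ∑ p ∈ P, star (c p) * pairOp c B (K p)

lemma cubicOp_antisymmPart (hcc : ∀ p q, c p * c q + c q * c p = 0) (P B : Finset ι)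
    (K : ι → ι → ι → ℂ) :
    cubicOp c P B (fun p => antisymmPart (K p)) = cubicOp c P B K := by
  simp only [cubicOp, pairOp_antisymmPart hcc]

lemma cubicOp_eq_sum (P B : Finset ι) (K : ι → ι → ι → ℂ) :
    cubicOp c P B K = ∑ p ∈ P, ∑ q ∈ B, ∑ r ∈ B, K p q r • (star (c p) * c q * c r) := by
  simp only [cubicOp, pairOp_eq_sum, Finset.mul_sum, mul_smul_comm, mul_assoc]

lemma star_smeared [StarModule ℂ R] (s : Finset ι) (f : ι → ℂ) :
    star (smeared c s f) = smeared (fun r => star (c r)) s (fun r => star (f r)) := by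
  simp only [smeared, star_sum, star_smul]

lemma star_pairOp [StarModule ℂ R] (s : Finset ι) (M : ι → ι → ℂ) :
    star (pairOp c s M) = ∑ q ∈ s, ∑ r ∈ s, star (M q r) • (star (c r) * star (c q)) := by
  simp only [pairOp, smeared, star_sum, star_mul, Finset.sum_mul, star_smul, smul_mul_assoc]

variable [DecidableEq ι]

lemma star_mul_smeared_add
    (hcs : ∀ p q, c p * star (c q) + star (c q) * c p = if p = q then 1 else 0)
    {s : Finset ι} {x : ι} (hx : x ∈ s) (f : ι → ℂ) :
    star (c x) * smeared c s f + smeared c s f * star (c x) = f x • 1 := by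
  simp only [smeared, Finset.mul_sum, Finset.sum_mul, mul_smul_comm, smul_mul_assoc,
    ← Finset.sum_add_distrib, ← smul_add, add_comm (star (c x) * _), hcs, smul_ite, smul_zero]
  rw [Finset.sum_ite_eq' s x, if_pos hx]

lemma smeared_mul_star_add [StarModule ℂ R]
    (hcs : ∀ p q, c p * star (c q) + star (c q) * c p = if p = q then 1 else 0)
    (s : Finset ι) (f g : ι → ℂ) :
    smeared c s f * star (smeared c s g) + star (smeared c s g) * smeared c s f =
      (∑ r ∈ s, f r * star (g r)) • 1 := by
  have h : star (smeared c s g) = ∑ r ∈ s, star (g r) • star (c r) := star_smeared s g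
  rw [h, Finset.mul_sum, Finset.sum_mul, ← Finset.sum_add_distrib, Finset.sum_smul]
  refine Finset.sum_congr rfl fun r hr => ?_
  rw [mul_smul_comm, smul_mul_assoc, ← smul_add, add_comm, star_mul_smeared_add hcs hr,
    smul_smul, mul_comm]

lemma star_mul_pairOp
    (hcs : ∀ p q, c p * star (c q) + star (c q) * c p = if p = q then 1 else 0)
    {s : Finset ι} {x : ι} (hx : x ∈ s) {M : ι → ι → ℂ} (hM : ∀ q r, M q r = - M r q) :
    star (c x) * pairOp c s M = (2 : ℂ) • smeared c s (M x) + pairOp c s M * star (c x) := by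
  have key : ∀ q, star (c x) * (c q * smeared c s (M q)) =
      (if q = x then smeared c s (M q) else 0) +
        (M x q • c q + c q * smeared c s (M q) * star (c x)) := by
    intro q
    have h1 : star (c x) * c q = (if q = x then 1 else 0) - c q * star (c x) := by
      rw [← hcs q x]; abel
    have h2 : star (c x) * smeared c s (M q) = M q x • 1 - smeared c s (M q) * star (c x) := by
      rw [← star_mul_smeared_add hcs hx]; abel
    rw [← mul_assoc, h1, sub_mul, mul_assoc (c q), h2, hM q x, mul_sub, mul_smul_comm, mul_one,
      neg_smul, mul_assoc]
    split_ifs <;> simp only [one_mul, zero_mul] <;> abel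
  simp only [pairOp, Finset.mul_sum, key, Finset.sum_add_distrib, Finset.sum_ite_eq', if_pos hx,
    Finset.sum_mul, two_smul]
  simp only [smeared, add_assoc]

lemma star_mul_star_mul_pairOp
    (hcs : ∀ p q, c p * star (c q) + star (c q) * c p = if p = q then 1 else 0)
    {s : Finset ι} {q r : ι} (hq : q ∈ s) (hr : r ∈ s) {N : ι → ι → ℂ}
    (hN : ∀ q r, N q r = - N r q) :
    star (c r) * star (c q) * pairOp c s N =
      (2 : ℂ) • (star (c r) * smeared c s (N q)) + (2 * N r q) • 1
        - (2 : ℂ) • (star (c q) * smeared c s (N r))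
        + pairOp c s N * (star (c r) * star (c q)) := by
  have h : smeared c s (N r) * star (c q) = N r q • 1 - star (c q) * smeared c s (N r) := by
    rw [← star_mul_smeared_add hcs hq]; abel
  rw [mul_assoc, star_mul_pairOp hcs hq hN, mul_add, ← mul_assoc, star_mul_pairOp hcs hr hN,
    add_mul, smul_mul_assoc, h, mul_smul_comm, mul_assoc, smul_sub, smul_smul]
  abel

lemma star_pairOp_mul_pairOp_eq_sum_star_smeared_mul_smeared [StarModule ℂ R]
    (hcs : ∀ p q, c p * star (c q) + star (c q) * c p = if p = q then 1 else 0)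
    {s : Finset ι} {M N : ι → ι → ℂ} (hM : ∀ q r, M q r = - M r q)
    (hN : ∀ q r, N q r = - N r q) :
    star (pairOp c s M) * pairOp c s N =
      (4 : ℂ) • ∑ q ∈ s, star (smeared c s (M q)) * smeared c s (N q)
        - (2 * ∑ q ∈ s, ∑ r ∈ s, star (M q r) * N q r) • 1
        + pairOp c s N * star (pairOp c s M) := by
  have hlhs : star (pairOp c s M) * pairOp c s N = ∑ q ∈ s, ∑ r ∈ s, star (M q r) •
      ((2 : ℂ) • (star (c r) * smeared c s (N q)) + (2 * N r q) • 1
        - (2 : ℂ) • (star (c q) * smeared c s (N r))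
        + pairOp c s N * (star (c r) * star (c q))) := by
    rw [star_pairOp, Finset.sum_mul]
    refine Finset.sum_congr rfl fun q hq => ?_
    rw [Finset.sum_mul]
    exact Finset.sum_congr rfl fun r hr => by
      rw [smul_mul_assoc, star_mul_star_mul_pairOp hcs hq hr hN]
  have hone : ∑ q ∈ s, star (smeared c s (M q)) * smeared c s (N q) =
      ∑ q ∈ s, ∑ r ∈ s, star (M q r) • (star (c r) * smeared c s (N q)) := by
    simp only [star_smeared]
    simp only [smeared, Finset.sum_mul, smul_mul_assoc]
  have hswap : ∑ q ∈ s, ∑ r ∈ s, star (M q r) • (star (c q) * smeared c s (N r)) =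
      - ∑ q ∈ s, ∑ r ∈ s, star (M q r) • (star (c r) * smeared c s (N q)) := by
    rw [Finset.sum_comm, ← Finset.sum_neg_distrib]
    refine Finset.sum_congr rfl fun q _ => ?_
    rw [← Finset.sum_neg_distrib]
    exact Finset.sum_congr rfl fun r _ => by rw [hM r q, star_neg, neg_smul]
  have hscalar : ∑ q ∈ s, ∑ r ∈ s, star (M q r) • (2 * N r q) • (1 : R) =
      - (2 * ∑ q ∈ s, ∑ r ∈ s, star (M q r) * N q r) • 1 := by
    simp only [← mul_neg, ← Finset.sum_neg_distrib, ← hN, Finset.mul_sum, Finset.sum_smul]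
    exact Finset.sum_congr rfl fun q _ => Finset.sum_congr rfl fun r _ => by
      rw [smul_smul, mul_left_comm]
  have hpull : ∀ f : ι → ι → R, ∑ q ∈ s, ∑ r ∈ s, star (M q r) • (2 : ℂ) • f q r =
      (2 : ℂ) • ∑ q ∈ s, ∑ r ∈ s, star (M q r) • f q r := by
    intro f
    simp only [Finset.smul_sum, smul_comm (2 : ℂ)]
  rw [hlhs, hone, star_pairOp, Finset.mul_sum]
  simp only [smul_add, smul_sub, Finset.sum_add_distrib, Finset.sum_sub_distrib]
  rw [hpull, hpull (fun q r => star (c q) * smeared c s (N r)), hswap, hscalar]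
  simp only [Finset.mul_sum, mul_smul_comm]
  module

lemma star_pairOp_mul_pairOp [StarModule ℂ R]
    (hcs : ∀ p q, c p * star (c q) + star (c q) * c p = if p = q then 1 else 0)
    {s : Finset ι} {M N : ι → ι → ℂ} (hM : ∀ q r, M q r = - M r q)
    (hN : ∀ q r, N q r = - N r q) :
    star (pairOp c s M) * pairOp c s N =
      (2 * ∑ q ∈ s, ∑ r ∈ s, star (M q r) * N q r) • 1
        - (4 : ℂ) • ∑ q ∈ s, smeared c s (N q) * star (smeared c s (M q))
        + pairOp c s N * star (pairOp c s M) := by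
  have h : ∀ q, star (smeared c s (M q)) * smeared c s (N q) =
      (∑ r ∈ s, star (M q r) * N q r) • 1 - smeared c s (N q) * star (smeared c s (M q)) := by
    intro q
    simp only [mul_comm (star (M q _))]
    rw [← smeared_mul_star_add hcs]
    abel
  rw [star_pairOp_mul_pairOp_eq_sum_star_smeared_mul_smeared hcs hM hN,
    Finset.sum_congr rfl fun q _ => h q, Finset.sum_sub_distrib, ← Finset.sum_smul]
  module

lemma star_cubicOp_mul_cubicOp [StarModule ℂ R]
    (hcc : ∀ p q, c p * c q + c q * c p = 0)
    (hcs : ∀ p q, c p * star (c q) + star (c q) * c p = if p = q then 1 else 0)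
    (P B : Finset ι) {K : ι → ι → ι → ℂ} (hK : ∀ p q r, K p q r = - K p r q) :
    star (cubicOp c P B K) * cubicOp c P B K =
      (2 * ∑ p ∈ P, ∑ q ∈ B, ∑ r ∈ B, star (K p q r) * K p q r) • 1
        - (4 : ℂ) • ∑ p ∈ P, ∑ q ∈ B, smeared c B (K p q) * star (smeared c B (K p q))
        + ∑ p ∈ P, pairOp c B (K p) * star (pairOp c B (K p))
        - (2 : ℂ) • ∑ q ∈ B, ∑ r ∈ B, smeared (fun p => star (c p)) P (fun p => K p q r)
            * star (smeared (fun p => star (c p)) P (fun p => K p q r))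
        + (4 : ℂ) • ∑ q ∈ B, (∑ p ∈ P, star (c p) * smeared c B (K p q))
            * star (∑ p ∈ P, star (c p) * smeared c B (K p q))
        - cubicOp c P B K * star (cubicOp c P B K) := by
  have hY : ∀ q r, smeared (fun p => star (c p)) P (fun p => K p q r) =
      ∑ p ∈ P, star (c p) * (K p q r • (1 : R)) := fun q r => by
    simp only [smeared, mul_smul_comm, mul_one]
  have hscalar : ∀ a b, (2 * ∑ q ∈ B, ∑ r ∈ B, star (K a q r) * K b q r) • (1 : R) =
      (2 : ℂ) • ∑ x ∈ B ×ˢ B, (K b x.1 x.2 • (1 : R)) * star (K a x.1 x.2 • (1 : R)) := by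
    intro a b
    simp only [star_smul, star_one, smul_mul_smul, one_mul, ← Finset.sum_smul, smul_smul,
      Finset.sum_product, mul_comm (K b _ _)]
  have hcross : ∑ a ∈ P, ∑ b ∈ P,
      star (c b) * (star (pairOp c B (K a)) * pairOp c B (K b)) * c a =
        (2 : ℂ) • ∑ q ∈ B, ∑ r ∈ B, smeared (fun p => star (c p)) P (fun p => K p q r)
            * star (smeared (fun p => star (c p)) P (fun p => K p q r))
        - (4 : ℂ) • ∑ q ∈ B, (∑ p ∈ P, star (c p) * smeared c B (K p q))
            * star (∑ p ∈ P, star (c p) * smeared c B (K p q))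
        + cubicOp c P B K * star (cubicOp c P B K) := by
    simp only [star_pairOp_mul_pairOp hcs (hK _) (hK _), hscalar, mul_add, mul_sub, add_mul,
      sub_mul, mul_smul_comm, smul_mul_assoc, Finset.sum_add_distrib, Finset.sum_sub_distrib,
      ← Finset.smul_sum]
    rw [← Finset.sum_product' (f := fun q r => smeared (fun p => star (c p)) P (fun p => K p q r)
      * star (smeared (fun p => star (c p)) P (fun p => K p q r)))]
    simp only [hY]
    rw [cubicOp, mul_star_self_sum_star_mul, sum_mul_star_self_sum_star_mul,
      sum_mul_star_self_sum_star_mul]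
    simp only [smul_mul_assoc]
  rw [cubicOp, star_mul_self_sum_star_mul_of_commute hcs
      (fun x p => commute_pairOp hcc x B (K p)) P, ← cubicOp, hcross]
  simp only [star_pairOp_mul_pairOp hcs (hK _) (hK _), Finset.sum_add_distrib,
    Finset.sum_sub_distrib, ← Finset.sum_smul, ← Finset.smul_sum, ← Finset.mul_sum]
  module

/-- The terms of `star_cubicOp_mul_cubicOp` missing on the right are all `-(x * star x)`. -/
lemma star_cubicOp_mul_cubicOp_le [StarModule ℂ R] [PartialOrder R] [StarOrderedRing R]
    (hcc : ∀ p q, c p * c q + c q * c p = 0)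
    (hcs : ∀ p q, c p * star (c q) + star (c q) * c p = if p = q then 1 else 0)
    (P B : Finset ι) {K : ι → ι → ι → ℂ} (hK : ∀ p q r, K p q r = - K p r q) :
    star (cubicOp c P B K) * cubicOp c P B K ≤
      (2 * ∑ p ∈ P, ∑ q ∈ B, ∑ r ∈ B, star (K p q r) * K p q r) • 1
        + ∑ p ∈ P, pairOp c B (K p) * star (pairOp c B (K p))
        + (4 : ℂ) • ∑ q ∈ B, (∑ p ∈ P, star (c p) * smeared c B (K p q))
            * star (∑ p ∈ P, star (c p) * smeared c B (K p q)) := by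
  have hsq : ∀ (Q : Finset ι) (x : ι → R), 0 ≤ ∑ q ∈ Q, x q * star (x q) :=
    fun Q x => Finset.sum_nonneg fun q _ => mul_star_self_nonneg (x q)
  have hdropped : 0 ≤
      (4 : ℂ) • ∑ p ∈ P, ∑ q ∈ B, smeared c B (K p q) * star (smeared c B (K p q))
        + (2 : ℂ) • ∑ q ∈ B, ∑ r ∈ B, smeared (fun p => star (c p)) P (fun p => K p q r)
            * star (smeared (fun p => star (c p)) P (fun p => K p q r))
        + cubicOp c P B K * star (cubicOp c P B K) := by
    simp only [ofNat_smul_eq_nsmul]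
    refine add_nonneg (add_nonneg (nsmul_nonneg ?_ _) (nsmul_nonneg ?_ _))
      (mul_star_self_nonneg _)
    · exact Finset.sum_nonneg fun p _ => hsq B _
    · exact Finset.sum_nonneg fun q _ => hsq B _
  rw [star_cubicOp_mul_cubicOp hcc hcs P B hK, ← sub_nonneg]
  convert hdropped using 1
  module

end StarAlgebra

section Hilbert

open RCLike

variable {H : Type*} [NormedAddCommGroup H] [InnerProductSpace ℂ H]

lemma re_inner_smul_one_apply (z : ℂ) (ξ : H) :
    re (inner ℂ ξ ((z • 1 : H →L[ℂ] H) ξ)) = re z * ‖ξ‖ ^ 2 := by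
  rw [smul_apply, one_apply_eq_self, inner_smul_right, inner_self_eq_norm_sq_to_K,
    ← ofReal_pow, re_mul_ofReal]

lemma re_inner_apply_le_of_le {X Y : H →L[ℂ] H} (h : X ≤ Y) (ξ : H) :
    re (inner ℂ ξ (X ξ)) ≤ re (inner ℂ ξ (Y ξ)) := by
  have := ((le_def X Y).mp h).re_inner_nonneg_right ξ
  rwa [sub_apply, inner_sub_right, map_sub, sub_nonneg] at this

variable [CompleteSpace H]

lemma norm_apply_sq_eq_re_inner_star_mul (X : H →L[ℂ] H) (ξ : H) :
    ‖X ξ‖ ^ 2 = re (inner ℂ ξ ((star X * X) ξ)) := by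
  rw [star_eq_adjoint]
  exact apply_norm_sq_eq_inner_adjoint_right X ξ

lemma re_inner_mul_star_apply (X : H →L[ℂ] H) (ξ : H) :
    re (inner ℂ ξ ((X * star X) ξ)) = ‖star X ξ‖ ^ 2 := by
  rw [norm_apply_sq_eq_re_inner_star_mul, star_star]

variable {ι : Type*} [DecidableEq ι]

lemma norm_smeared_apply_sq_le {e : ι → H →L[ℂ] H}
    (hes : ∀ p q, e p * star (e q) + star (e q) * e p = if p = q then 1 else 0)
    (s : Finset ι) (f : ι → ℂ) (ξ : H) :
    ‖smeared e s f ξ‖ ^ 2 ≤ (∑ r ∈ s, ‖f r‖ ^ 2) * ‖ξ‖ ^ 2 := by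
  have hle : star (smeared e s f) * smeared e s f ≤ (∑ r ∈ s, f r * star (f r)) • 1 := by
    rw [← smeared_mul_star_add hes]
    exact le_add_of_nonneg_left (mul_star_self_nonneg _)
  have hsum : re (∑ r ∈ s, f r * star (f r)) = ∑ r ∈ s, ‖f r‖ ^ 2 := by
    simp only [map_sum, RCLike.star_def, RCLike.mul_conj, ← ofReal_pow, ofReal_re]
  rw [norm_apply_sq_eq_re_inner_star_mul, ← hsum, ← re_inner_smul_one_apply]
  exact re_inner_apply_le_of_le hle ξ

lemma norm_sum_smeared_apply_sq_le {κ : Type*} {e : ι → H →L[ℂ] H}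
    (hes : ∀ p q, e p * star (e q) + star (e q) * e p = if p = q then 1 else 0)
    (s : Finset κ) (t : Finset ι) (f : κ → ι → ℂ) (ξ : κ → H) :
    ‖∑ i ∈ s, smeared e t (f i) (ξ i)‖ ^ 2
      ≤ (∑ i ∈ s, ∑ j ∈ t, ‖f i j‖ ^ 2) * ∑ i ∈ s, ‖ξ i‖ ^ 2 := by
  have hterm : ∀ i, ‖smeared e t (f i) (ξ i)‖ ≤ √(∑ j ∈ t, ‖f i j‖ ^ 2) * ‖ξ i‖ := by
    intro i
    rw [← Real.sqrt_sq (norm_nonneg (ξ i)), ← Real.sqrt_mul (by positivity)]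
    exact Real.le_sqrt_of_sq_le (norm_smeared_apply_sq_le hes t (f i) (ξ i))
  calc ‖∑ i ∈ s, smeared e t (f i) (ξ i)‖ ^ 2
      ≤ (∑ i ∈ s, √(∑ j ∈ t, ‖f i j‖ ^ 2) * ‖ξ i‖) ^ 2 := by
        gcongr
        exact (norm_sum_le _ _).trans (Finset.sum_le_sum fun i _ => hterm i)
    _ ≤ (∑ i ∈ s, √(∑ j ∈ t, ‖f i j‖ ^ 2) ^ 2) * ∑ i ∈ s, ‖ξ i‖ ^ 2 :=
        Finset.sum_mul_sq_le_sq_mul_sq s _ _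
    _ = (∑ i ∈ s, ∑ j ∈ t, ‖f i j‖ ^ 2) * ∑ i ∈ s, ‖ξ i‖ ^ 2 := by
        simp only [Real.sq_sqrt (Finset.sum_nonneg fun _ _ => sq_nonneg _)]

variable {c : ι → H →L[ℂ] H}

lemma norm_star_pairOp_apply_sq_le
    (hcs : ∀ p q, c p * star (c q) + star (c q) * c p = if p = q then 1 else 0)
    (s : Finset ι) (M : ι → ι → ℂ) (Ψ : H) :
    ‖star (pairOp c s M) Ψ‖ ^ 2 ≤
      (∑ q ∈ s, ∑ r ∈ s, ‖M q r‖ ^ 2) * ∑ q ∈ s, ‖star (c q) Ψ‖ ^ 2 := by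
  have h : star (pairOp c s M) Ψ = ∑ q ∈ s,
      smeared (fun r => star (c r)) s (fun r => star (M q r)) (star (c q) Ψ) := by
    simp only [star_pairOp, smeared, _root_.sum_apply, smul_apply, mul_apply_eq_comp]
  simpa only [h, norm_star] using norm_sum_smeared_apply_sq_le (anticomm_star_star hcs) s s
    (fun q r => star (M q r)) (fun q => star (c q) Ψ)

lemma norm_star_sum_star_mul_smeared_apply_sq_le
    (hcs : ∀ p q, c p * star (c q) + star (c q) * c p = if p = q then 1 else 0)
    (P B : Finset ι) (M : ι → ι → ℂ) (Ψ : H) :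
    ‖star (∑ p ∈ P, star (c p) * smeared c B (M p)) Ψ‖ ^ 2 ≤
      (∑ p ∈ P, ∑ r ∈ B, ‖M p r‖ ^ 2) * ∑ p ∈ P, ‖c p Ψ‖ ^ 2 := by
  have h : star (∑ p ∈ P, star (c p) * smeared c B (M p)) Ψ = ∑ p ∈ P,
      smeared (fun r => star (c r)) B (fun r => star (M p r)) (c p Ψ) := by
    simp only [star_sum, star_mul, star_star, star_smeared, _root_.sum_apply, mul_apply_eq_comp]
  simpa only [h, norm_star] using norm_sum_smeared_apply_sq_le (anticomm_star_star hcs) P B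
    (fun p r => star (M p r)) (fun p => c p Ψ)

theorem norm_cubicOp_apply_sq_le_of_antisymm (hcc : ∀ p q, c p * c q + c q * c p = 0)
    (hcs : ∀ p q, c p * star (c q) + star (c q) * c p = if p = q then 1 else 0)
    (P B : Finset ι) {K : ι → ι → ι → ℂ} (hK : ∀ p q r, K p q r = - K p r q) (Ψ : H) :
    ‖cubicOp c P B K Ψ‖ ^ 2 ≤ (∑ p ∈ P, ∑ q ∈ B, ∑ r ∈ B, ‖K p q r‖ ^ 2) *
      (2 * ‖Ψ‖ ^ 2 + ∑ q ∈ B, ‖star (c q) Ψ‖ ^ 2 + 4 * ∑ p ∈ P, ‖c p Ψ‖ ^ 2) := by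
  have hVsum : ∑ p ∈ P, ‖star (pairOp c B (K p)) Ψ‖ ^ 2 ≤
      (∑ p ∈ P, ∑ q ∈ B, ∑ r ∈ B, ‖K p q r‖ ^ 2) * ∑ q ∈ B, ‖star (c q) Ψ‖ ^ 2 :=
    (Finset.sum_le_sum fun p _ => norm_star_pairOp_apply_sq_le hcs B (K p) Ψ).trans_eq
      (Finset.sum_mul ..).symm
  have hZsum : ∑ q ∈ B, ‖star (∑ p ∈ P, star (c p) * smeared c B (K p q)) Ψ‖ ^ 2 ≤
      (∑ p ∈ P, ∑ q ∈ B, ∑ r ∈ B, ‖K p q r‖ ^ 2) * ∑ p ∈ P, ‖c p Ψ‖ ^ 2 :=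
    (Finset.sum_le_sum fun q _ =>
      norm_star_sum_star_mul_smeared_apply_sq_le hcs P B (fun p => K p q) Ψ).trans_eq
        (by rw [← Finset.sum_mul, Finset.sum_comm])
  have hre := re_inner_apply_le_of_le (star_cubicOp_mul_cubicOp_le hcc hcs P B hK) Ψ
  rw [← norm_apply_sq_eq_re_inner_star_mul] at hre
  simp only [add_apply, inner_add_right, map_add] at hre
  rw [re_inner_smul_one_apply] at hre
  simp only [_root_.sum_apply, inner_sum, map_sum, re_inner_mul_star_apply, smul_apply,
    inner_smul_right, mul_re, ofNat_re, ofNat_im, zero_mul, sub_zero, RCLike.star_def,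
    RCLike.conj_mul, ← ofReal_pow, ofReal_re] at hre
  linarith

theorem norm_cubicOp_apply_sq_le (hcc : ∀ p q, c p * c q + c q * c p = 0)
    (hcs : ∀ p q, c p * star (c q) + star (c q) * c p = if p = q then 1 else 0)
    (P B : Finset ι) (K : ι → ι → ι → ℂ) (Ψ : H) :
    ‖cubicOp c P B K Ψ‖ ^ 2 ≤ (∑ p ∈ P, ∑ q ∈ B, ∑ r ∈ B, ‖K p q r‖ ^ 2) *
      (2 * ‖Ψ‖ ^ 2 + ∑ q ∈ B, ‖star (c q) Ψ‖ ^ 2 + 4 * ∑ p ∈ P, ‖c p Ψ‖ ^ 2) := by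
  rw [← cubicOp_antisymmPart hcc]
  refine (norm_cubicOp_apply_sq_le_of_antisymm hcc hcs P B
    (fun p => antisymmPart_apply_swap (K p)) Ψ).trans ?_
  exact mul_le_mul_of_nonneg_right
    (Finset.sum_le_sum fun p _ => sum_norm_sq_antisymmPart_le B (K p)) (by positivity)

end Hilbert

end CAR

lemma finsum_eq_sum_sum_sum {ι M : Type*} [AddCommMonoid M] (f : ι × ι × ι → M)
    {P B : Finset ι} (h : Function.support f ⊆ ↑(P ×ˢ (B ×ˢ B))) :
    ∑ᶠ x, f x = ∑ p ∈ P, ∑ q ∈ B, ∑ r ∈ B, f (p, q, r) := by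
  rw [finsum_eq_sum_of_support_subset f h, Finset.sum_product]
  exact Finset.sum_congr rfl fun p _ => Finset.sum_product _ _ _

lemma support_subset_image_fst_product {α β M : Type*} [Zero M] [DecidableEq α]
    {f : α × β → M} (hf : (Function.support f).Finite) {B : Finset β}
    (hB : ∀ x, f x ≠ 0 → x.2 ∈ B) :
    Function.support f ⊆ ↑(hf.toFinset.image Prod.fst ×ˢ B) := fun x hx =>
  Finset.mem_product.mpr ⟨Finset.mem_image_of_mem _ (hf.mem_toFinset.mpr hx), hB x hx⟩

lemma sum_le_tsum_subtype {α : Type*} {p : α → Prop} {f : α → ℝ}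
    (hf : Summable fun x : Subtype p => f x) (hnn : ∀ x, 0 ≤ f x) {s : Finset α}
    (hs : ∀ x ∈ s, p x) : ∑ x ∈ s, f x ≤ ∑' x : Subtype p, f x := by
  classical
  rw [← Finset.sum_subtype_of_mem f hs]
  exact hf.sum_le_tsum _ fun x _ => hnn x

theorem higher_order_fermionic_estimate_general
    {H : Type*} [NormedAddCommGroup H] [InnerProductSpace ℂ H] [CompleteSpace H]
    (c : (Fin 3 → ℤ) → H →L[ℂ] H)
    (hCAR1 : ∀ p q, c p * c q + c q * c p = 0)
    (hCAR2 : ∀ p q, c p * adjoint (c q) + adjoint (c q) * c p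
        = if p = q then (1 : H →L[ℂ] H) else 0)
    (kF : ℝ)
    (BF : Finset (Fin 3 → ℤ)) (hBF : ∀ p, p ∈ BF ↔ inBF kF p)
    (A : (Fin 3 → ℤ) × (Fin 3 → ℤ) × (Fin 3 → ℤ) → ℂ)
    (hAfin : (Function.support A).Finite)
    (hAsupp : ∀ p q r, A (p, q, r) ≠ 0 → ¬ inBF kF p ∧ inBF kF q ∧ inBF kF r)
    (Ψ : H)
    (hsum : Summable (fun p : {p : Fin 3 → ℤ // ¬ inBF kF p} => ‖c p.val Ψ‖ ^ 2))
    (heq : ∑' p : {p : Fin 3 → ℤ // ¬ inBF kF p}, ‖c p.val Ψ‖ ^ 2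
        = ∑ q ∈ BF, ‖adjoint (c q) Ψ‖ ^ 2) :
    ‖∑ᶠ x : (Fin 3 → ℤ) × (Fin 3 → ℤ) × (Fin 3 → ℤ),
        A x • ((adjoint (c x.1) * c x.2.1 * c x.2.2) Ψ)‖ ^ 2
      ≤ 5 * (∑ᶠ x : (Fin 3 → ℤ) × (Fin 3 → ℤ) × (Fin 3 → ℤ), ‖A x‖ ^ 2)
          * ((∑ q ∈ BF, ‖adjoint (c q) Ψ‖ ^ 2) + ‖Ψ‖ ^ 2) := by
  classical
  simp only [← star_eq_adjoint] at hCAR2 heq ⊢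
  set P := hAfin.toFinset.image Prod.fst
  have hsupp : Function.support A ⊆ ↑(P ×ˢ (BF ×ˢ BF)) :=
    support_subset_image_fst_product hAfin fun x hx => by
      simpa only [Finset.mem_product, hBF] using (hAsupp x.1 x.2.1 x.2.2 hx).2
  have hP : ∑ p ∈ P, ‖c p Ψ‖ ^ 2 ≤ ∑ q ∈ BF, ‖star (c q) Ψ‖ ^ 2 :=
    heq ▸ sum_le_tsum_subtype hsum (fun _ => sq_nonneg _) fun p hp => by
      obtain ⟨x, hx, rfl⟩ := Finset.mem_image.mp hp
      exact (hAsupp x.1 x.2.1 x.2.2 (hAfin.mem_toFinset.mp hx)).1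
  have hT : ∑ᶠ x, A x • (star (c x.1) * c x.2.1 * c x.2.2) Ψ =
      CAR.cubicOp c P BF (fun p q r => A (p, q, r)) Ψ := by
    rw [finsum_eq_sum_sum_sum _ fun x hx => hsupp fun h => hx (by simp only [h, zero_smul]),
      CAR.cubicOp_eq_sum]
    simp only [_root_.sum_apply, smul_apply]
  rw [hT, finsum_eq_sum_sum_sum _ fun x hx => hsupp fun h => hx (by simp [h])]
  refine (CAR.norm_cubicOp_apply_sq_le hCAR1 hCAR2 P BF _ Ψ).trans ?_
  have hA : 0 ≤ ∑ p ∈ P, ∑ q ∈ BF, ∑ r ∈ BF, ‖A (p, q, r)‖ ^ 2 :=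
    Finset.sum_nonneg fun _ _ => Finset.sum_nonneg fun _ _ => Finset.sum_nonneg fun _ _ =>
      sq_nonneg _
  have hN : 2 * ‖Ψ‖ ^ 2 + ∑ q ∈ BF, ‖star (c q) Ψ‖ ^ 2 + 4 * ∑ p ∈ P, ‖c p Ψ‖ ^ 2 ≤
      5 * (∑ q ∈ BF, ‖star (c q) Ψ‖ ^ 2 + ‖Ψ‖ ^ 2) := by
    linarith [sq_nonneg ‖Ψ‖]
  exact (mul_le_mul_of_nonneg_left hN hA).trans_eq (by ring)

/-- the higher order fermionic estimate for cubic expressions. -/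
theorem higher_order_fermionic_estimate
    {H : Type*} [NormedAddCommGroup H] [InnerProductSpace ℂ H] [CompleteSpace H]
    (c : (Fin 3 → ℤ) → H →L[ℂ] H)
    (hCAR1 : ∀ p q, c p * c q + c q * c p = 0)
    (hCAR2 : ∀ p q, c p * adjoint (c q) + adjoint (c q) * c p
        = if p = q then (1 : H →L[ℂ] H) else 0)
    (kF : ℝ) (hkF : 0 < kF)
    (BF : Finset (Fin 3 → ℤ)) (hBF : ∀ p, p ∈ BF ↔ inBF kF p)
    (A : (Fin 3 → ℤ) × (Fin 3 → ℤ) × (Fin 3 → ℤ) → ℂ)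
    (hAfin : (Function.support A).Finite)
    (hAsupp : ∀ p q r, A (p, q, r) ≠ 0 → ¬ inBF kF p ∧ inBF kF q ∧ inBF kF r)
    (Ψ : H)
    (hsum : Summable (fun p : {p : Fin 3 → ℤ // ¬ inBF kF p} => ‖c p.val Ψ‖ ^ 2))
    (heq : ∑' p : {p : Fin 3 → ℤ // ¬ inBF kF p}, ‖c p.val Ψ‖ ^ 2
        = ∑ q ∈ BF, ‖adjoint (c q) Ψ‖ ^ 2) :
    ‖∑ᶠ x : (Fin 3 → ℤ) × (Fin 3 → ℤ) × (Fin 3 → ℤ),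
        A x • ((adjoint (c x.1) * c x.2.1 * c x.2.2) Ψ)‖ ^ 2
      ≤ 5 * (∑ᶠ x : (Fin 3 → ℤ) × (Fin 3 → ℤ) × (Fin 3 → ℤ), ‖A x‖ ^ 2)
          * ((∑ q ∈ BF, ‖adjoint (c q) Ψ‖ ^ 2) + ‖Ψ‖ ^ 2) :=
  higher_order_fermionic_estimate_general c hCAR1 hCAR2 kF BF hBF A hAfin hAsupp Ψ hsum heq

end
end

section
/- For any k ∈ ℤ³ ∖ {0}, any real coefficient vector φ = (φ_p)_{p∈L_k} and any Ψ ∈ H, one has ‖b_k(φ) Ψ‖² ≤ (Σ_{p∈L_k} φ_p²) · ⟨Ψ, 𝒩_k Ψ⟩ and ‖b_k*(φ) Ψ‖² ≤ (Σ_{p∈L_k} φ_p²) · ( ⟨Ψ, 𝒩_k Ψ⟩ + ‖Ψ‖² ), where 𝒩_k = Σ_{p∈L_k} b_{k,p}* b_{k,p}. (Equivalently, ‖b_k(φ)Ψ‖ ≤ ‖φ‖ ‖𝒩_k^{1/2} Ψ‖ and ‖b_k*(φ)Ψ‖ ≤ ‖φ‖ ‖(𝒩_k + 1)^{1/2} Ψ‖.)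 -/
/-!
Part one is Cauchy–Schwarz applied to `b_k(φ) Ψ = Σ_p φ_p (b_{k,p} Ψ)`.
For part two, `‖b_k*(φ) Ψ‖² = ‖b_k(φ) Ψ‖² + ⟨Ψ, [b_k(φ), b_k*(φ)] Ψ⟩`, and the CAR give
`[b_{k,p}, b_{k,q}*] = δ_{pq} (c_{p-k}* c_{p-k} - c_p* c_p)`, so the commutator is
`Σ_p φ_p² (c_{p-k}* c_{p-k} - c_p* c_p) ≤ Σ_p φ_p²` because `0 ≤ c* c ≤ c* c + c c* = 1`.
-/

noncomputable section

open ContinuousLinearMap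

open scoped InnerProductSpace

structure IsCARFamily {ι R : Type*} [DecidableEq ι] [Ring R] [StarRing R] (c : ι → R) : Prop where
  mul_add_mul : ∀ p q, c p * c q + c q * c p = 0
  mul_star_add_star_mul : ∀ p q, c p * star (c q) + star (c q) * c p = if p = q then 1 else 0

namespace IsCARFamily

variable {ι R : Type*} [DecidableEq ι] [Ring R] [StarRing R] {c : ι → R}

lemma star_mul_star_add (hc : IsCARFamily c) (p q : ι) :
    star (c p) * star (c q) + star (c q) * star (c p) = 0 := by
  simpa only [star_add, star_mul, star_zero, add_comm] using congrArg star (hc.mul_add_mul p q)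

lemma commutator_star_mul_star_mul (hc : IsCARFamily c) (a b d e : ι) :
    star (c a) * c b * (star (c d) * c e) - star (c d) * c e * (star (c a) * c b)
      = (if b = d then star (c a) * c e else 0) - if e = a then star (c d) * c b else 0 := by
  have hbd := hc.mul_star_add_star_mul b d
  have hea := hc.mul_star_add_star_mul e a
  have hbe : c b * c e = -(c e * c b) := eq_neg_of_add_eq_zero_left (hc.mul_add_mul b e)
  have had : star (c a) * star (c d) = -(star (c d) * star (c a)) :=
    eq_neg_of_add_eq_zero_left (hc.star_mul_star_add a d)
  calc star (c a) * c b * (star (c d) * c e) - star (c d) * c e * (star (c a) * c b)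
      = star (c a) * (c b * star (c d) + star (c d) * c b) * c e
          - star (c d) * (c e * star (c a) + star (c a) * c e) * c b
          - (star (c a) * star (c d)) * (c b * c e) + star (c d) * star (c a) * (c e * c b) := by
        noncomm_ring
    _ = _ := by
        rw [hbd, hea, hbe, had]
        split_ifs <;> noncomm_ring

lemma commutator_excitation [AddGroup ι] (hc : IsCARFamily c) (k p q : ι) :
    star (c (p - k)) * c p * (star (c q) * c (q - k))
        - star (c q) * c (q - k) * (star (c (p - k)) * c p)
      = if p = q then star (c (p - k)) * c (p - k) - star (c p) * c p else 0 := by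
  rw [hc.commutator_star_mul_star_mul]
  by_cases hpq : p = q
  · subst hpq; simp
  · simp [hpq, sub_left_inj, eq_comm]

end IsCARFamily

lemma sum_smul_commutator_of_diagonal {ι 𝕜 R : Type*} [DecidableEq ι] [CommRing 𝕜] [Ring R]
    [Algebra 𝕜 R] (s : Finset ι) (f : ι → 𝕜) (T S D : ι → R)
    (h : ∀ p q, T p * S q - S q * T p = if p = q then D p else 0) :
    (∑ p ∈ s, f p • T p) * (∑ p ∈ s, f p • S p) - (∑ p ∈ s, f p • S p) * (∑ p ∈ s, f p • T p)
      = ∑ p ∈ s, f p ^ 2 • D p := by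
  rw [Finset.sum_mul_sum, Finset.sum_mul_sum, Finset.sum_comm (s := s) (t := s)
    (f := fun p q => f p • S p * f q • T q), ← Finset.sum_sub_distrib]
  refine Finset.sum_congr rfl fun p hp => ?_
  simp_rw [← Finset.sum_sub_distrib, smul_mul_smul_comm, mul_comm (f _) (f p), ← smul_sub, h p,
    smul_ite, smul_zero]
  rw [Finset.sum_ite_eq, if_pos hp, sq]

section Hilbert

variable {H : Type*} [NormedAddCommGroup H] [InnerProductSpace ℂ H]

lemma norm_sum_ofReal_smul_sq_le {ι : Type*} (s : Finset ι) (φ : ι → ℝ) (v : ι → H) :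
    ‖∑ p ∈ s, (φ p : ℂ) • v p‖ ^ 2 ≤ (∑ p ∈ s, φ p ^ 2) * ∑ p ∈ s, ‖v p‖ ^ 2 := by
  have hnorm : ‖∑ p ∈ s, (φ p : ℂ) • v p‖ ≤ ∑ p ∈ s, |φ p| * ‖v p‖ := by
    refine (norm_sum_le _ _).trans_eq (Finset.sum_congr rfl fun p _ => ?_)
    rw [norm_smul, Complex.norm_real, Real.norm_eq_abs]
  calc ‖∑ p ∈ s, (φ p : ℂ) • v p‖ ^ 2 ≤ (∑ p ∈ s, |φ p| * ‖v p‖) ^ 2 := by gcongr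
    _ ≤ (∑ p ∈ s, |φ p| ^ 2) * ∑ p ∈ s, ‖v p‖ ^ 2 := Finset.sum_mul_sq_le_sq_mul_sq ..
    _ = _ := by simp only [sq_abs]

lemma re_inner_sum_ofReal_smul_apply {ι : Type*} (s : Finset ι) (φ : ι → ℝ)
    (T : ι → H →L[ℂ] H) (Ψ : H) :
    (⟪Ψ, (∑ p ∈ s, (φ p : ℂ) • T p) Ψ⟫_ℂ).re = ∑ p ∈ s, φ p * (⟪Ψ, T p Ψ⟫_ℂ).re := by
  simp [sum_apply]

variable [CompleteSpace H]

lemma re_inner_adjoint_mul_apply (A : H →L[ℂ] H) (Ψ : H) :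
    (⟪Ψ, (adjoint A * A) Ψ⟫_ℂ).re = ‖A Ψ‖ ^ 2 := by
  rw [apply_norm_sq_eq_inner_adjoint_right, RCLike.re_to_complex]
  rfl

lemma norm_adjoint_apply_sq (A : H →L[ℂ] H) (Ψ : H) :
    ‖adjoint A Ψ‖ ^ 2 = ‖A Ψ‖ ^ 2 + (⟪Ψ, (A * adjoint A - adjoint A * A) Ψ⟫_ℂ).re := by
  rw [← re_inner_adjoint_mul_apply, ← re_inner_adjoint_mul_apply, adjoint_adjoint, sub_apply,
    inner_sub_right, Complex.sub_re]
  ring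

lemma norm_apply_sq_le_of_anticomm {a : H →L[ℂ] H} (ha : a * adjoint a + adjoint a * a = 1)
    (Ψ : H) : ‖a Ψ‖ ^ 2 ≤ ‖Ψ‖ ^ 2 := by
  have hsum : ‖a Ψ‖ ^ 2 + ‖adjoint a Ψ‖ ^ 2 = ‖Ψ‖ ^ 2 := by
    rw [← re_inner_adjoint_mul_apply, ← re_inner_adjoint_mul_apply, adjoint_adjoint,
      ← Complex.add_re, ← inner_add_right, ← add_apply, add_comm, ha, one_apply_eq_self,
      inner_self_eq_norm_sq_to_K]
    norm_cast
  nlinarith [sq_nonneg ‖adjoint a Ψ‖]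

end Hilbert

theorem excitation_operator_bounds_general
    {H : Type*} [NormedAddCommGroup H] [InnerProductSpace ℂ H] [CompleteSpace H]
    (c : (Fin 3 → ℤ) → H →L[ℂ] H)
    (hCAR1 : ∀ p q, c p * c q + c q * c p = 0)
    (hCAR2 : ∀ p q, c p * adjoint (c q) + adjoint (c q) * c p
        = if p = q then (1 : H →L[ℂ] H) else 0)
    (k : Fin 3 → ℤ)
    (Lk : Finset (Fin 3 → ℤ))
    (φ : (Fin 3 → ℤ) → ℝ) (Ψ : H) :
    ‖(∑ p ∈ Lk, (φ p : ℂ) • (adjoint (c (p - k)) * c p)) Ψ‖ ^ 2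
        ≤ (∑ p ∈ Lk, (φ p) ^ 2) * (∑ p ∈ Lk, ‖(adjoint (c (p - k)) * c p) Ψ‖ ^ 2) ∧
    ‖(∑ p ∈ Lk, (φ p : ℂ) • (adjoint (c p) * c (p - k))) Ψ‖ ^ 2
        ≤ (∑ p ∈ Lk, (φ p) ^ 2)
            * ((∑ p ∈ Lk, ‖(adjoint (c (p - k)) * c p) Ψ‖ ^ 2) + ‖Ψ‖ ^ 2) := by
  have hc : IsCARFamily c := ⟨hCAR1, by simpa only [star_eq_adjoint] using hCAR2⟩
  set B := ∑ p ∈ Lk, (φ p : ℂ) • (adjoint (c (p - k)) * c p)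
  have hB : ‖B Ψ‖ ^ 2 ≤ (∑ p ∈ Lk, φ p ^ 2) * ∑ p ∈ Lk, ‖(adjoint (c (p - k)) * c p) Ψ‖ ^ 2 := by
    simpa only [B, sum_apply, smul_apply] using norm_sum_ofReal_smul_sq_le Lk φ _
  have hadj : adjoint B = ∑ p ∈ Lk, (φ p : ℂ) • (adjoint (c p) * c (p - k)) := by
    simp only [B, ← star_eq_adjoint, star_sum, star_smul, star_mul, star_star, Complex.star_def,
      Complex.conj_ofReal]
  have hcomm : B * adjoint B - adjoint B * B
      = ∑ p ∈ Lk, (φ p : ℂ) ^ 2 • (adjoint (c (p - k)) * c (p - k) - adjoint (c p) * c p) := by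
    rw [hadj]
    refine sum_smul_commutator_of_diagonal Lk _ _ _ _ fun p q => ?_
    simpa only [star_eq_adjoint] using hc.commutator_excitation k p q
  have hcommΨ : (⟪Ψ, (B * adjoint B - adjoint B * B) Ψ⟫_ℂ).re ≤ (∑ p ∈ Lk, φ p ^ 2) * ‖Ψ‖ ^ 2 := by
    simp only [hcomm, ← Complex.ofReal_pow, re_inner_sum_ofReal_smul_apply, sub_apply,
      inner_sub_right, Complex.sub_re, re_inner_adjoint_mul_apply, Finset.sum_mul]
    refine Finset.sum_le_sum fun p _ => ?_
    have hcp := norm_apply_sq_le_of_anticomm (by simpa using hCAR2 (p - k) (p - k)) Ψ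
    nlinarith [sq_nonneg (φ p), sq_nonneg ‖c p Ψ‖]
  refine ⟨hB, ?_⟩
  rw [← hadj, norm_adjoint_apply_sq]
  linarith

/-- bounds for the generalized excitation operators
`b_k(φ) = Σ_{p∈L_k} φ_p c_{p-k}* c_p` and `b_k*(φ) = Σ_{p∈L_k} φ_p c_p* c_{p-k}`
in terms of `⟨Ψ, 𝒩_k Ψ⟩ = Σ_{p∈L_k} ‖b_{k,p} Ψ‖²`. -/
theorem excitation_operator_bounds
    {H : Type*} [NormedAddCommGroup H] [InnerProductSpace ℂ H] [CompleteSpace H]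
    (c : (Fin 3 → ℤ) → H →L[ℂ] H)
    (hCAR1 : ∀ p q, c p * c q + c q * c p = 0)
    (hCAR2 : ∀ p q, c p * adjoint (c q) + adjoint (c q) * c p
        = if p = q then (1 : H →L[ℂ] H) else 0)
    (kF : ℝ) (hkF : 0 < kF)
    (k : Fin 3 → ℤ) (hk : k ≠ 0)
    (Lk : Finset (Fin 3 → ℤ)) (hLk : ∀ p, p ∈ Lk ↔ inLune kF k p)
    (φ : (Fin 3 → ℤ) → ℝ) (Ψ : H) :
    ‖(∑ p ∈ Lk, (φ p : ℂ) • (adjoint (c (p - k)) * c p)) Ψ‖ ^ 2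
        ≤ (∑ p ∈ Lk, (φ p) ^ 2) * (∑ p ∈ Lk, ‖(adjoint (c (p - k)) * c p) Ψ‖ ^ 2) ∧
    ‖(∑ p ∈ Lk, (φ p : ℂ) • (adjoint (c p) * c (p - k))) Ψ‖ ^ 2
        ≤ (∑ p ∈ Lk, (φ p) ^ 2)
            * ((∑ p ∈ Lk, ‖(adjoint (c (p - k)) * c p) Ψ‖ ^ 2) + ‖Ψ‖ ^ 2) :=
  excitation_operator_bounds_general c hCAR1 hCAR2 k Lk φ Ψ

end
end

section
/- Let n ∈ ℕ and let A, B, Z be n×n complex Hermitian matrices such that A is positive definite, Z is positive semidefinite, B is Hermitian, and A Z = Z A. If both Z − [A,[A,B]] and Z + [A,[A,B]] are positive semidefinite (i.e. ±[A,[A,B]] ≤ Z in the Loewner order), then both (1/4) A⁻¹ Z − [A^{1/2},[A^{1/2},B]] and (1/4) A⁻¹ Z + [A^{1/2},[A^{1/2},B]] are positive semidefinite (i.e. ±[A^{1/2},[A^{1/2},B]] ≤ (1/4) A⁻¹ Z), where A^{1/2} denotes the positive square root of A and [X,Y] = XY − YX. -/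
noncomputable section

open scoped ComplexOrder

/-- The positive square root of a positive semidefinite matrix, as `Matrix.PosSemidef.sqrt`
was defined in Mathlib (Dec 2024); it has since been removed in favour of `CFC.sqrt`. -/
def Matrix.PosSemidef.sqrt {n : Type*} [Fintype n] [DecidableEq n] {𝕜 : Type*} [RCLike 𝕜]
    {A : Matrix n n 𝕜} (hA : A.PosSemidef) : Matrix n n 𝕜 :=
  (hA.1.eigenvectorUnitary : Matrix n n 𝕜) * Matrix.diagonal ((↑) ∘ Real.sqrt ∘ hA.1.eigenvalues) *
    (star (hA.1.eigenvectorUnitary : Matrix n n 𝕜))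

/-! Write `S = √A` and `L Y = S Y + Y S`. Since `A = S²`, `L² [S,[S,X]] = [A,[A,X]]`, and for `W`
commuting with `S`, `L² W = 4 A W`; so with `W = A⁻¹ Z / 4` the hypothesis says that
`L² (W ∓ [S,[S,B]]) = Z ∓ [A,[A,B]]` is positive semidefinite. Positivity then descends through
`L` twice: if `L Y ≥ 0` for a Hermitian `Y` and `S > 0`, then for an eigenvector `v` of `Y` with
eigenvalue `μ`, `0 ≤ v* (L Y) v = 2 μ v* S v`, so `μ ≥ 0`. -/

theorem Commute.mul_add_mul_twice_sub_lie_lie {R : Type*} [Ring R] {S W : R} (h : Commute S W)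
    (X : R) :
    let Y := W - ⁅S, ⁅S, X⁆⁆
    S * (S * Y + Y * S) + (S * Y + Y * S) * S = 4 • (S * S * W) - ⁅S * S, ⁅S * S, X⁆⁆ := by
  intro Y
  have hSWS : S * W * S = S * S * W := by rw [mul_assoc, ← h.eq, mul_assoc]
  have hWSS : W * S * S = S * S * W := by rw [← h.eq, mul_assoc, ← h.eq, mul_assoc]
  calc _ = S * S * W + 2 • (S * W * S) + W * S * S - ⁅S * S, ⁅S * S, X⁆⁆ := by
        simp only [Y, Ring.lie_def]
        noncomm_ring
    _ = _ := by
        rw [hSWS, hWSS]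
        noncomm_ring

namespace Matrix

variable {n 𝕜 : Type*} [Fintype n] [DecidableEq n] [RCLike 𝕜]

theorem commute_nonsing_inv_left {α : Type*} [CommRing α] {A B : Matrix n n α}
    (h : Commute A B) : Commute A⁻¹ B := by
  by_cases hA : IsUnit A.det
  · let := invertibleOfIsUnitDet A hA
    rw [← invOf_eq_nonsing_inv]
    exact h.invOf_left
  · rw [nonsing_inv_apply_not_isUnit A hA]
    exact Commute.zero_left B

theorem IsHermitian.lie_lie {S X : Matrix n n 𝕜} (hS : S.IsHermitian) (hX : X.IsHermitian) :
    ⁅S, ⁅S, X⁆⁆.IsHermitian := by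
  simp only [IsHermitian, Ring.lie_def, conjTranspose_sub, conjTranspose_mul, hS.eq, hX.eq]
  noncomm_ring

theorem PosSemidef.of_posDef_mul_add_mul {S Y : Matrix n n 𝕜} (hS : S.PosDef)
    (hY : Y.IsHermitian) (h : (S * Y + Y * S).PosSemidef) : Y.PosSemidef := by
  rw [hY.posSemidef_iff_eigenvalues_nonneg, Pi.le_def]
  intro i
  set v := (hY.eigenvectorBasis i).ofLp
  set μ := hY.eigenvalues i
  have hv : v ≠ 0 := by
    simpa [v] using hY.eigenvectorBasis.orthonormal.ne_zero i
  have hYv : Y *ᵥ v = (μ : 𝕜) • v := by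
    rw [hY.mulVec_eigenvectorBasis i, RCLike.real_smul_eq_coe_smul (K := 𝕜)]
  have hvY : star v ᵥ* Y = (μ : 𝕜) • star v := by
    rw [← hY.eq, ← star_mulVec, hYv, star_smul, RCLike.star_def, RCLike.conj_ofReal]
  have hquad : star v ⬝ᵥ (S * Y + Y * S) *ᵥ v = 2 * μ * (star v ⬝ᵥ S *ᵥ v) := by
    rw [add_mulVec, dotProduct_add, ← mulVec_mulVec, ← mulVec_mulVec, hYv, mulVec_smul,
      dotProduct_smul, dotProduct_mulVec (star v) Y, hvY, smul_dotProduct, smul_eq_mul]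
    ring
  have hnonneg : 0 ≤ 2 * (μ : 𝕜) * (star v ⬝ᵥ S *ᵥ v) :=
    hquad ▸ h.dotProduct_mulVec_nonneg v
  have h2μ : (0 : 𝕜) ≤ ((2 * μ : ℝ) : 𝕜) :=
    le_of_mul_le_mul_of_pos_right (by push_cast; rwa [zero_mul]) (hS.dotProduct_mulVec_pos hv)
  show 0 ≤ μ
  linarith [RCLike.ofReal_nonneg.mp h2μ]

theorem PosSemidef.sub_lie_lie_of_posDef {S W X : Matrix n n 𝕜} (hS : S.PosDef)
    (hW : W.IsHermitian) (hSW : Commute S W) (hX : X.IsHermitian)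
    (h : (4 • (S * S * W) - ⁅S * S, ⁅S * S, X⁆⁆).PosSemidef) : (W - ⁅S, ⁅S, X⁆⁆).PosSemidef := by
  set Y := W - ⁅S, ⁅S, X⁆⁆
  have hY : Y.IsHermitian := hW.sub (hS.1.lie_lie hX)
  have hSY : (S * Y + Y * S).IsHermitian := by
    simp only [IsHermitian, conjTranspose_add, conjTranspose_mul, hS.1.eq, hY.eq, add_comm]
  refine .of_posDef_mul_add_mul hS hY (.of_posDef_mul_add_mul hS hSY ?_)
  rwa [hSW.mul_add_mul_twice_sub_lie_lie X]

open scoped MatrixOrder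

theorem PosSemidef.sqrt_eq_cfcSqrt {A : Matrix n n 𝕜} (hA : A.PosSemidef) :
    hA.sqrt = CFC.sqrt A := by
  rw [CFC.sqrt_eq_real_sqrt A hA.nonneg, cfcₙ_eq_cfc, hA.1.cfc_eq]
  rfl

theorem PosSemidef.sqrt_mul_self {A : Matrix n n 𝕜} (hA : A.PosSemidef) :
    hA.sqrt * hA.sqrt = A := by
  rw [hA.sqrt_eq_cfcSqrt, CFC.sqrt_mul_sqrt_self A hA.nonneg]

theorem PosDef.posDef_sqrt {A : Matrix n n 𝕜} (hA : A.PosDef) : hA.posSemidef.sqrt.PosDef := by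
  rw [hA.posSemidef.sqrt_eq_cfcSqrt]
  exact isStrictlyPositive_iff_posDef.mp (IsStrictlyPositive.sqrt A hA.isStrictlyPositive)

theorem PosSemidef.commute_sqrt {A B : Matrix n n 𝕜} (hA : A.PosSemidef) (h : Commute A B) :
    Commute hA.sqrt B := by
  rw [hA.sqrt_eq_cfcSqrt, CFC.sqrt_eq_cfc]
  exact h.cfc_nnreal _

end Matrix

open Matrix

/-- the commutator-root estimate
`±[A,[A,B]] ≤ Z  ⟹  ±[√A,[√A,B]] ≤ (1/4) A⁻¹ Z`. -/
theorem commutator_sqrt_estimate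
    (n : ℕ) (A B Z : Matrix (Fin n) (Fin n) ℂ)
    (hA : A.PosDef) (hB : B.IsHermitian) (hZ : Z.PosSemidef)
    (hcomm : A * Z = Z * A)
    (hub : (Z - (A * (A * B - B * A) - (A * B - B * A) * A)).PosSemidef)
    (hlb : (Z + (A * (A * B - B * A) - (A * B - B * A) * A)).PosSemidef) :
    ((1 / 4 : ℂ) • (A⁻¹ * Z)
        - (hA.posSemidef.sqrt * (hA.posSemidef.sqrt * B - B * hA.posSemidef.sqrt)
            - (hA.posSemidef.sqrt * B - B * hA.posSemidef.sqrt) * hA.posSemidef.sqrt)).PosSemidef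
      ∧
    ((1 / 4 : ℂ) • (A⁻¹ * Z)
        + (hA.posSemidef.sqrt * (hA.posSemidef.sqrt * B - B * hA.posSemidef.sqrt)
            - (hA.posSemidef.sqrt * B - B * hA.posSemidef.sqrt) * hA.posSemidef.sqrt)).PosSemidef := by
  set S := hA.posSemidef.sqrt
  set W := (1 / 4 : ℂ) • (A⁻¹ * Z)
  have hAZ : Commute A Z := hcomm
  have hW : W.IsHermitian :=
    (hA.1.inv.commute_iff hZ.1 |>.mp (commute_nonsing_inv_left hAZ)).smul (by simp)
  have hSW : Commute S W :=
    ((hA.posSemidef.commute_sqrt (commute_nonsing_inv_left (Commute.refl A)).symm).mul_right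
      (hA.posSemidef.commute_sqrt hAZ)).smul_right _
  have hZW : 4 • (S * S * W) = Z := by
    rw [hA.posSemidef.sqrt_mul_self, mul_smul_comm, ← mul_assoc,
      mul_nonsing_inv A ((isUnit_iff_isUnit_det A).mp hA.isUnit), one_mul,
      ← Nat.cast_smul_eq_nsmul ℂ, smul_smul]
    norm_num
  have key : ∀ X : Matrix (Fin n) (Fin n) ℂ, X.IsHermitian → (Z - ⁅A, ⁅A, X⁆⁆).PosSemidef →
      (W - ⁅S, ⁅S, X⁆⁆).PosSemidef := fun X hX h =>
    .sub_lie_lie_of_posDef hA.posDef_sqrt hW hSW hX (by rwa [hZW, hA.posSemidef.sqrt_mul_self])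
  have hneg : ∀ T X : Matrix (Fin n) (Fin n) ℂ, ⁅T, ⁅T, -X⁆⁆ = -⁅T, ⁅T, X⁆⁆ := fun T X => by
    simp only [Ring.lie_def]
    noncomm_ring
  simp only [← Ring.lie_def] at hub hlb ⊢
  refine ⟨key B hB hub, ?_⟩
  simpa only [hneg, sub_neg_eq_add] using
    key (-B) hB.neg (by simpa only [hneg, sub_neg_eq_add] using hlb)
end
end
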